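/- Let π ≤ β ≤ 2π and π/2 ≤ γ ≤ π, let ψ be the normalized positive solution with c = c_β, and set f(θ) = ψ'(θ)/ψ(θ). For each θ ∈ [π/2, 3π/2 − γ] let θ₁ ∈ (0, π/2] be the angle uniquely determined by cot θ₁ = −cos(θ+γ). Then f(θ₁) ≥ f(θ)·(1 + cos²(θ+γ))/(2 + sin(θ+γ)). -/

import Mathlib

open Real Set Filter
open scoped Classical

/-- `c` solves the Hardy-constant equation for the angle `β`. -/
def hardyEq (c β : ℝ) : Prop :=
  Real.sqrt c * Real.tan (Real.sqrt c * ((β - Real.pi) / 2)) =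
    2 * (Real.Gamma ((3 + Real.sqrt (1 - 4 * c)) / 4) /
         Real.Gamma ((1 + Real.sqrt (1 - 4 * c)) / 4)) ^ 2

/-- `βcr` is the critical angle: the unique angle in `(π, 2π)` with
`tan((βcr − π)/4) = 4 (Γ(3/4)/Γ(1/4))²`. -/
def isBetaCr (βcr : ℝ) : Prop :=
  βcr ∈ Set.Ioo Real.pi (2 * Real.pi) ∧
    Real.tan ((βcr - Real.pi) / 4) = 4 * (Real.Gamma (3 / 4) / Real.Gamma (1 / 4)) ^ 2

/-- `c = c_β`: for `β ≤ βcr`, `c = 1/4`; for `β > βcr`, `c` is the unique solution in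
`(0, 1/4]` of the Hardy-constant equation for `β`. -/
def isHardyConst (βcr β c : ℝ) : Prop :=
  (β ≤ βcr ∧ c = 1 / 4) ∨ (βcr < β ∧ c ∈ Set.Ioc (0 : ℝ) (1 / 4) ∧ hardyEq c β)

/-- The potential `V` on `(0, β)`. -/
noncomputable def Vpot (β θ : ℝ) : ℝ :=
  if θ < Real.pi / 2 then 1 / Real.sin θ ^ 2
  else if θ < β - Real.pi / 2 then 1
  else 1 / Real.sin (β - θ) ^ 2

/-!
`f = ψ'/ψ` solves the Riccati equation `f' = -c V - f²` with `V ≥ 1`, so `f(θ) + c θ` is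
nonincreasing. On `[π/2, β/2]`, where `V = 1`, the Riccati equation integrates to
`f(π/2) = √c tan(√c (β - π)/2)`, which the convexity of `tan` bounds by `2c`; hence `f(θ) ≤ 2c`.
The factor `k = (1 + cos²(θ+γ))/(2 + sin(θ+γ))` lies in `[1, 1 - cos(θ+γ)/4]`, and
`-cos(θ+γ) = cot θ₁ ≤ 2 (π/2 - θ₁)`, so
`f(θ) k ≤ f(θ) + 2c (k - 1) ≤ f(θ) + c (θ - θ₁) ≤ f(θ₁)`.

The endpoint `β = π` is ruled out by comparing `ψ` with the strict subsolution `√(sin θ)`: their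
Wronskian would make `ψ/√sin` blow up at `0`, against the normalization `ψ(θ)/θ^{1/2} → 1`.
-/

open Topology

lemma tan_le_four_div_pi_mul {x : ℝ} (hx0 : 0 ≤ x) (hx : x ≤ π / 4) : tan x ≤ 4 / π * x := by
  have hcos : ∀ y ∈ Icc (0 : ℝ) (π / 4), 0 < cos y := fun y hy =>
    cos_pos_of_mem_Ioo ⟨by linarith [hy.1, pi_pos], by linarith [hy.2, pi_pos]⟩
  have hconv : ConvexOn ℝ (Icc 0 (π / 4)) tan := by
    refine MonotoneOn.convexOn_of_deriv (convex_Icc _ _)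
      (fun y hy => (continuousAt_tan.2 (hcos y hy).ne').continuousWithinAt)
      (fun y hy =>
        (differentiableAt_tan.2 (hcos y (interior_subset hy)).ne').differentiableWithinAt)
      ?_
    intro y hy z hz hyz
    rw [interior_Icc] at hy hz
    simp only [deriv_tan]
    have hcz := hcos z (Ioo_subset_Icc_self hz)
    have hcos_le : cos z ≤ cos y :=
      cos_le_cos_of_nonneg_of_le_pi hy.1.le (by linarith [hz.2, pi_pos]) hyz
    gcongr
  have hπ := pi_pos
  have h := hconv.2 (left_mem_Icc.2 (by positivity)) (right_mem_Icc.2 (by positivity))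
    (show 0 ≤ 1 - 4 / π * x by rw [sub_nonneg, div_mul_eq_mul_div, div_le_one hπ]; linarith)
    (show 0 ≤ 4 / π * x by positivity) (by ring)
  have hx' : (1 - 4 / π * x) • (0 : ℝ) + (4 / π * x) • (π / 4) = x := by
    simp only [smul_eq_mul, mul_zero, zero_add]; field_simp
  rw [hx', tan_zero, tan_pi_div_four] at h
  simpa using h

lemma cot_le_two_mul_pi_div_two_sub {x : ℝ} (hx0 : 0 < x) (hx : x ≤ π / 2) (hcot : cot x ≤ 1) :
    cot x ≤ 2 * (π / 2 - x) := by
  have htan : tan (π / 2 - x) = cot x := by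
    rw [tan_pi_div_two_sub, tan_eq_sin_div_cos, inv_div, cot_eq_cos_div_sin]
  have hπ4 : π / 2 - x ≤ π / 4 := by
    by_contra! h
    have := tan_lt_tan_of_nonneg_of_lt_pi_div_two (by positivity) (by linarith) h
    rw [tan_pi_div_four, htan] at this
    linarith
  calc cot x = tan (π / 2 - x) := htan.symm
    _ ≤ 4 / π * (π / 2 - x) := tan_le_four_div_pi_mul (by linarith) hπ4
    _ ≤ 2 * (π / 2 - x) := by
      gcongr
      rw [div_le_iff₀ pi_pos]; linarith [pi_gt_three]

lemma sqrt_mul_tan_le_two_mul {c ℓ : ℝ} (hc0 : 0 ≤ c) (hc : c ≤ 1 / 4) (hℓ0 : 0 ≤ ℓ)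
    (hℓ : ℓ ≤ π / 2) : √c * tan (√c * ℓ) ≤ 2 * c := by
  have hsqrt : √c ≤ 1 / 2 := (sqrt_le_left (by norm_num)).2 (by linarith)
  have hπ := pi_pos
  calc √c * tan (√c * ℓ) ≤ √c * (4 / π * (√c * ℓ)) := by
        gcongr
        exact tan_le_four_div_pi_mul (by positivity) (by nlinarith [sqrt_nonneg c])
    _ = 4 * (√c * √c) * ℓ / π := by ring
    _ = 4 * c * ℓ / π := by rw [mul_self_sqrt hc0]
    _ ≤ 2 * c := by rw [div_le_iff₀ hπ]; nlinarith

lemma parabola_factor_mem_Icc {φ : ℝ} (hφ : φ ∈ Icc π (3 * π / 2)) :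
    (1 + cos φ ^ 2) / (2 + sin φ) ∈ Icc 1 (1 - cos φ / 4) := by
  have hπ := pi_pos
  have hc : 0 ≤ -cos φ := neg_nonneg.2 <|
    cos_nonpos_of_pi_div_two_le_of_le (by linarith [hφ.1]) (by linarith [hφ.2])
  have hs : 0 ≤ -sin φ := by
    rw [← sin_sub_pi]
    exact sin_nonneg_of_nonneg_of_le_pi (by linarith [hφ.1]) (by linarith [hφ.2])
  have hpyth := sin_sq_add_cos_sq φ
  have hs1 := neg_one_le_sin φ
  have hden : 0 < 2 + sin φ := by linarith
  rw [mem_Icc, one_le_div hden, div_le_iff₀ hden]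
  constructor
  · nlinarith
  · -- on the arc `m² + s² = 1`, `m, s ≥ 0`, this is `4 s (1 - s) ≤ m (2 - s)`
    set m := -cos φ
    set s := -sin φ
    nlinarith [sq_nonneg (m - s), sq_nonneg (m - 1), sq_nonneg (2 * m - 1), sq_nonneg (m + s - 1),
      mul_nonneg hc hs, sq_nonneg (2 * m - s), sq_nonneg (2 * m + s - 2),
      mul_nonneg (mul_nonneg hc hs) hs]

lemma HasDerivAt.riccati_div {ψ ψ' : ℝ → ℝ} {x P : ℝ} (hψ : HasDerivAt ψ (ψ' x) x)
    (hψ' : HasDerivAt ψ' (-(P * ψ x)) x) (hx : ψ x ≠ 0) :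
    HasDerivAt (fun y => ψ' y / ψ y) (-P - (ψ' x / ψ x) ^ 2) x :=
  (hψ'.fun_div hψ hx).congr_deriv (by field_simp)

lemma antitoneOn_add_mul_of_riccati {f V : ℝ → ℝ} {c : ℝ} {s : Set ℝ} (hs : Convex ℝ s)
    (hc : 0 ≤ c) (hV : ∀ x ∈ s, 1 ≤ V x) (hf : ∀ x ∈ s, HasDerivAt f (-(c * V x) - f x ^ 2) x) :
    AntitoneOn (fun x => f x + c * x) s := by
  have hF : ∀ x ∈ s, HasDerivAt (fun x => f x + c * x) (-(c * V x) - f x ^ 2 + c) x :=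
    fun x hx => by simpa using (hf x hx).fun_add ((hasDerivAt_id x).const_mul c)
  refine antitoneOn_of_hasDerivWithinAt_nonpos hs
    (fun x hx => (hF x hx).continuousAt.continuousWithinAt)
    (fun x hx => (hF x (interior_subset hx)).hasDerivWithinAt) fun x hx => ?_
  nlinarith [hV x (interior_subset hx), sq_nonneg (f x)]

lemma eq_sqrt_mul_tan_of_riccati {f : ℝ → ℝ} {a b c : ℝ} (hc : 0 < c) (hab : a ≤ b)
    (hf : ∀ x ∈ Icc a b, HasDerivAt f (-c - f x ^ 2) x) (hb : f b = 0) :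
    f a = √c * tan (√c * (b - a)) := by
  have hsqrt : 0 < √c := sqrt_pos.2 hc
  -- `arctan (f / √c) + √c x` is the first integral of `f' = -c - f²`
  set h := fun x => arctan (f x / √c) + √c * x
  have hh : ∀ x ∈ Icc a b, HasDerivAt h 0 x := by
    intro x hx
    refine (((hf x hx).div_const √c).arctan.fun_add
      ((hasDerivAt_id' x).const_mul √c)).congr_deriv ?_
    field_simp
    rw [sq_sqrt hc.le]
    ring
  have hconst := constant_of_has_deriv_right_zero
    (fun x hx => (hh x hx).continuousAt.continuousWithinAt)
    (fun x hx => (hh x (Ico_subset_Icc_self hx)).hasDerivWithinAt) b (right_mem_Icc.2 hab)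
  simp only [h, hb, zero_div, arctan_zero, zero_add] at hconst
  have harctan : arctan (f a / √c) = √c * (b - a) := by linarith
  rw [← harctan, tan_arctan]
  field_simp

lemma hasDerivAt_cos_div_two_sqrt_sin {x : ℝ} (hx : 0 < sin x) :
    HasDerivAt (fun y => cos y / (2 * √(sin y)))
      (-(1 / 4 * (1 / sin x ^ 2) * √(sin x)) - 1 / 4 * √(sin x)) x := by
  have hw : 0 < √(sin x) := sqrt_pos.2 hx
  refine ((hasDerivAt_cos x).fun_div (((hasDerivAt_sin x).sqrt hx.ne').const_mul 2)
    (by positivity)).congr_deriv ?_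
  have hsq : √(sin x) ^ 2 = sin x := sq_sqrt hx.le
  have hsq4 : √(sin x) ^ 4 = sin x ^ 2 := by rw [show 4 = 2 * 2 from rfl, pow_mul, hsq]
  field_simp
  rw [cos_sq', hsq, hsq4]
  ring

lemma HasDerivAt.wronskian {ψ ψ' w w' : ℝ → ℝ} {x P r : ℝ} (hψ : HasDerivAt ψ (ψ' x) x)
    (hψ' : HasDerivAt ψ' (-(P * ψ x)) x) (hw : HasDerivAt w (w' x) x)
    (hw' : HasDerivAt w' (-(P * w x) - r * w x) x) :
    HasDerivAt (fun y => ψ' y * w y - ψ y * w' y) (r * (ψ x * w x)) x :=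
  ((hψ'.fun_mul hw).fun_sub (hψ.fun_mul hw')).congr_deriv (by ring)

lemma tendsto_atTop_of_hasDerivAt_le_neg_div {q q' : ℝ → ℝ} {a δ : ℝ} (ha : 0 < a) (hδ : 0 < δ)
    (hq : ∀ x ∈ Ioc 0 a, HasDerivAt q (q' x) x) (hq' : ∀ x ∈ Ioc 0 a, q' x ≤ -δ / x) :
    Tendsto q (𝓝[>] 0) atTop := by
  have hG : ∀ x ∈ Ioc 0 a, HasDerivAt (fun x => q x + δ * log x) (q' x + δ * x⁻¹) x :=
    fun x hx => (hq x hx).fun_add ((hasDerivAt_log hx.1.ne').const_mul δ)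
  have hanti : AntitoneOn (fun x => q x + δ * log x) (Ioc 0 a) := by
    refine antitoneOn_of_hasDerivWithinAt_nonpos (convex_Ioc 0 a)
      (fun x hx => (hG x hx).continuousAt.continuousWithinAt)
      (fun x hx => (hG x (interior_subset hx)).hasDerivWithinAt) fun x hx => ?_
    have := hq' x (interior_subset hx)
    rw [neg_div, ← div_eq_mul_inv] at *
    linarith
  have hlog : Tendsto (fun x => q a + δ * log a + -δ * log x) (𝓝[>] 0) atTop :=
    tendsto_atTop_add_const_left _ _ (tendsto_log_nhdsGT_zero.const_mul_atBot_of_neg (by linarith))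
  refine tendsto_atTop_mono' _ ?_ hlog
  filter_upwards [Ioc_mem_nhdsGT ha] with x hx
  have := hanti hx (right_mem_Ioc.2 ha) hx.2
  dsimp only at this ⊢
  linarith

lemma tendsto_div_sqrt_sin_of_tendsto_div_rpow {ψ : ℝ → ℝ} {l : ℝ}
    (h : Tendsto (fun x => ψ x / x ^ (1 / 2 : ℝ)) (𝓝[>] 0) (𝓝 l)) :
    Tendsto (fun x => ψ x / √(sin x)) (𝓝[>] 0) (𝓝 l) := by
  have hsinc : Tendsto (fun x => √(sinc x)) (𝓝[>] 0) (𝓝 1) := by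
    simpa using (continuous_sinc.sqrt.tendsto 0).mono_left nhdsWithin_le_nhds
  have hdiv := h.div hsinc one_ne_zero
  rw [div_one] at hdiv
  refine hdiv.congr' ?_
  filter_upwards [self_mem_nhdsWithin] with x (hx : 0 < x)
  rw [Pi.div_apply, sinc_of_ne_zero hx.ne', sqrt_div' _ hx.le, ← sqrt_eq_rpow]
  have : √x ≠ 0 := (sqrt_pos.2 hx).ne'
  field_simp

lemma one_le_Vpot {β θ : ℝ} (hθ : θ ∈ Ioo 0 β) : 1 ≤ Vpot β θ := by
  have one_le_inv_sin_sq : ∀ y ∈ Ioo 0 π, 1 ≤ 1 / sin y ^ 2 := fun y hy =>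
    one_le_one_div (by have := sin_pos_of_mem_Ioo hy; positivity)
      (pow_le_one₀ (sin_pos_of_mem_Ioo hy).le (sin_le_one y))
  unfold Vpot
  split_ifs
  · exact one_le_inv_sin_sq θ ⟨hθ.1, by linarith [pi_pos]⟩
  · exact le_rfl
  · exact one_le_inv_sin_sq (β - θ) ⟨by linarith [hθ.2], by linarith [pi_pos]⟩

lemma Vpot_eq_one {β θ : ℝ} (h1 : π / 2 ≤ θ) (h2 : θ < β - π / 2) : Vpot β θ = 1 := by
  rw [Vpot, if_neg h1.not_gt, if_pos h2]

lemma Vpot_pi (θ : ℝ) : Vpot π θ = 1 / sin θ ^ 2 := by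
  unfold Vpot
  split_ifs
  · rfl
  · linarith
  · rw [sin_pi_sub]

lemma isHardyConst.mem_Ioc {βcr β c : ℝ} (h : isHardyConst βcr β c) : c ∈ Ioc 0 (1 / 4) := by
  rcases h with ⟨-, rfl⟩ | ⟨-, hc, -⟩
  · norm_num
  · exact hc

lemma isHardyConst.eq_one_div_four {βcr β c : ℝ} (hβcr : isBetaCr βcr) (h : isHardyConst βcr β c)
    (hβ : β ≤ π) : c = 1 / 4 := by
  rcases h with ⟨-, hc⟩ | ⟨hlt, -, -⟩
  · exact hc
  · linarith [hβcr.1.1]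

lemma not_tendsto_div_rpow_of_deriv_pi_div_two_eq_zero {ψ ψ' : ℝ → ℝ}
    (hpos : ∀ x ∈ Ioo 0 π, 0 < ψ x) (hder : ∀ x ∈ Ioo 0 π, HasDerivAt ψ (ψ' x) x)
    (hode : ∀ x ∈ Ioo 0 π, HasDerivAt ψ' (-(1 / 4 * (1 / sin x ^ 2) * ψ x)) x)
    (hcrit : ψ' (π / 2) = 0) :
    ¬ Tendsto (fun x => ψ x / x ^ (1 / 2 : ℝ)) (𝓝[>] 0) (𝓝 1) := by
  intro hnorm
  have hπ := pi_pos
  have hsin : ∀ x ∈ Ioo 0 π, 0 < sin x := fun x hx => sin_pos_of_mem_Ioo hx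
  -- `√sin` is a positive strict subsolution of the equation, with `(√sin)'(π/2) = 0`
  set w := fun x => √(sin x)
  set w' := fun x => cos x / (2 * √(sin x))
  have hw : ∀ x ∈ Ioo 0 π, HasDerivAt w (w' x) x := fun x hx =>
    (hasDerivAt_sin x).sqrt (hsin x hx).ne'
  set W := fun x => ψ' x * w x - ψ x * w' x
  have hW : ∀ x ∈ Ioo 0 π, HasDerivAt W (1 / 4 * (ψ x * w x)) x := fun x hx =>
    (hder x hx).wronskian (hode x hx) (hw x hx) (hasDerivAt_cos_div_two_sqrt_sin (hsin x hx))
  have hWmono : StrictMonoOn W (Ioo 0 π) := by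
    refine strictMonoOn_of_hasDerivWithinAt_pos (convex_Ioo 0 π)
      (fun x hx => (hW x hx).continuousAt.continuousWithinAt)
      (fun x hx => (hW x (interior_subset hx)).hasDerivWithinAt) fun x hx => ?_
    rw [interior_Ioo] at hx
    have := hpos x hx
    have := sqrt_pos.2 (hsin x hx)
    positivity
  have hW_pi_div_two : W (π / 2) = 0 := by simp [W, w', hcrit]
  obtain ⟨δ, hδ, hWδ⟩ : ∃ δ > 0, ∀ x ∈ Ioc 0 (π / 4), W x ≤ -δ := by
    have hπ4 : π / 4 ∈ Ioo 0 π := ⟨by positivity, by linarith⟩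
    refine ⟨-W (π / 4), ?_, fun x hx => ?_⟩
    · linarith [hWmono hπ4 ⟨by positivity, by linarith⟩ (by linarith : π / 4 < π / 2)]
    · rw [neg_neg]
      exact hWmono.monotoneOn ⟨hx.1, by linarith [hx.2]⟩ hπ4 hx.2
  have hq' : ∀ x ∈ Ioc 0 (π / 4), W x / w x ^ 2 ≤ -δ / x := by
    intro x hx
    have hx' : x ∈ Ioo 0 π := ⟨hx.1, by linarith [hx.2]⟩
    calc W x / w x ^ 2 = W x / sin x := by rw [sq_sqrt (hsin x hx').le]
      _ ≤ -δ / sin x := by gcongr; exacts [(hsin x hx').le, hWδ x hx]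
      _ ≤ -δ / x := by
        rw [neg_div, neg_div, neg_le_neg_iff]
        exact div_le_div_of_nonneg_left hδ.le (hsin x hx') (sin_le hx.1.le)
  have hq : Tendsto (fun x => ψ x / w x) (𝓝[>] 0) atTop :=
    tendsto_atTop_of_hasDerivAt_le_neg_div (by positivity) hδ
      (fun x hx => (hder x ⟨hx.1, by linarith [hx.2]⟩).div (hw x ⟨hx.1, by linarith [hx.2]⟩)
        (sqrt_pos.2 (hsin x ⟨hx.1, by linarith [hx.2]⟩)).ne') hq'
  exact not_tendsto_nhds_of_tendsto_atTop hq 1 (tendsto_div_sqrt_sin_of_tendsto_div_rpow hnorm)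

lemma pi_lt_of_normalized_solution {β βcr c α : ℝ} {ψ ψ' : ℝ → ℝ} (hβ : π ≤ β)
    (hβcr : isBetaCr βcr) (hc : isHardyConst βcr β c) (hα : α = (1 + √(1 - 4 * c)) / 2)
    (hpos : ∀ x ∈ Ioo 0 β, 0 < ψ x) (hder : ∀ x ∈ Ioo 0 β, HasDerivAt ψ (ψ' x) x)
    (hode : ∀ x ∈ Ioo 0 β, HasDerivAt ψ' (-(c * Vpot β x * ψ x)) x) (hbc : ψ' (β / 2) = 0)
    (hnorm : Tendsto (fun x => ψ x / x ^ α) (𝓝[>] 0) (𝓝 1)) : π < β := by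
  refine hβ.lt_of_ne fun hβπ => ?_
  subst hβπ
  have hc_eq : c = 1 / 4 := hc.eq_one_div_four hβcr le_rfl
  refine not_tendsto_div_rpow_of_deriv_pi_div_two_eq_zero hpos hder (fun x hx => ?_) hbc ?_
  · simpa [hc_eq, Vpot_pi] using hode x hx
  · convert hnorm; rw [hα, hc_eq]; norm_num

lemma le_two_mul_of_riccati_Vpot {f : ℝ → ℝ} {β c : ℝ} (hβ : π < β) (hβ2 : β ≤ 2 * π)
    (hc0 : 0 < c) (hc4 : c ≤ 1 / 4)
    (hf : ∀ x ∈ Ioo 0 β, HasDerivAt f (-(c * Vpot β x) - f x ^ 2) x) (hf0 : f (β / 2) = 0) :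
    f (π / 2) ≤ 2 * c := by
  have hf_eq : f (π / 2) = √c * tan (√c * (β / 2 - π / 2)) := by
    refine eq_sqrt_mul_tan_of_riccati hc0 (by linarith) (fun x hx => ?_) hf0
    have hx' : x ∈ Ioo 0 β := ⟨by linarith [hx.1, pi_pos], by linarith [hx.2]⟩
    simpa [Vpot_eq_one (β := β) hx.1 (by linarith [hx.2])] using hf x hx'
  rw [hf_eq]
  exact sqrt_mul_tan_le_two_mul hc0.le hc4 (by linarith) (by linarith)

theorem f_comparison_parabola_general
    (β βcr cβ α : ℝ) (ψ ψ' : ℝ → ℝ)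
    (hβ1 : Real.pi ≤ β) (hβ2 : β ≤ 2 * Real.pi)
    (hβcr : isBetaCr βcr) (hcβ : isHardyConst βcr β cβ)
    (hα : α = (1 + Real.sqrt (1 - 4 * cβ)) / 2)
    (hpos : ∀ θ ∈ Set.Ioo 0 β, 0 < ψ θ)
    (hder : ∀ θ ∈ Set.Ioo 0 β, HasDerivAt ψ (ψ' θ) θ)
    (hode : ∀ θ ∈ Set.Ioo 0 β, HasDerivAt ψ' (-(cβ * Vpot β θ * ψ θ)) θ)
    (hbc : ψ' (β / 2) = 0)
    (hnorm : Filter.Tendsto (fun θ => ψ θ / θ ^ α) (nhdsWithin 0 (Set.Ioi 0)) (nhds 1))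
    (γ θ θ₁ : ℝ) (hγ1 : Real.pi / 2 ≤ γ)
    (hθ : θ ∈ Set.Icc (Real.pi / 2) (3 * Real.pi / 2 - γ))
    (hθ₁ : θ₁ ∈ Set.Ioc 0 (Real.pi / 2))
    (hcot : Real.cot θ₁ = -Real.cos (θ + γ)) :
    ψ' θ / ψ θ * ((1 + Real.cos (θ + γ) ^ 2) / (2 + Real.sin (θ + γ))) ≤
      ψ' θ₁ / ψ θ₁ := by
  obtain ⟨hc0, hc4⟩ := hcβ.mem_Ioc
  have hβπ : π < β := pi_lt_of_normalized_solution hβ1 hβcr hcβ hα hpos hder hode hbc hnorm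
  set f := fun x => ψ' x / ψ x
  have hf : ∀ x ∈ Ioo 0 β, HasDerivAt f (-(cβ * Vpot β x) - f x ^ 2) x := fun x hx =>
    (hder x hx).riccati_div (hode x hx) (hpos x hx).ne'
  have hanti := antitoneOn_add_mul_of_riccati (convex_Ioo 0 β) hc0.le
    (fun x hx => one_le_Vpot hx) hf
  have hθ_mem : θ ∈ Ioo 0 β := ⟨by linarith [hθ.1, pi_pos], by linarith [hθ.2]⟩
  have hfθ : f θ ≤ 2 * cβ := by
    have hmono := hanti ⟨by linarith [pi_pos], by linarith⟩ hθ_mem hθ.1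
    have hf_pi_div_two := le_two_mul_of_riccati_Vpot hβπ hβ2 hc0 hc4 hf (by simp [f, hbc])
    dsimp only at hmono
    nlinarith [mul_nonneg hc0.le (sub_nonneg.2 hθ.1)]
  have hfθ₁ : f θ + cβ * (θ - θ₁) ≤ f θ₁ := by
    have := hanti ⟨hθ₁.1, by linarith [hθ₁.2]⟩ hθ_mem (by linarith [hθ₁.2, hθ.1])
    dsimp only at this
    linarith
  obtain ⟨hk1, hk2⟩ := parabola_factor_mem_Icc (φ := θ + γ)
    ⟨by linarith [hθ.1], by linarith [hθ.2]⟩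
  have hcos : -cos (θ + γ) ≤ 2 * (π / 2 - θ₁) := by
    rw [← hcot]
    refine cot_le_two_mul_pi_div_two_sub hθ₁.1 hθ₁.2 ?_
    linarith [neg_one_le_cos (θ + γ)]
  set k := (1 + cos (θ + γ) ^ 2) / (2 + sin (θ + γ))
  calc f θ * k = f θ + f θ * (k - 1) := by ring
    _ ≤ f θ + 2 * cβ * (-cos (θ + γ) / 4) := by gcongr; nlinarith
    _ ≤ f θ + cβ * (θ - θ₁) := by nlinarith [hθ.1]
    _ ≤ f θ₁ := hfθ₁

/-- Let `ψ` be the normalized positive solution (extended symmetrically to `(0, β)`) of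
`−ψ'' = c_β·V·ψ` with `ψ'(β/2) = 0` and `ψ(θ)/θ^α → 1` as `θ → 0+`, and `f = ψ'/ψ`.
For `π/2 ≤ γ ≤ π` and `θ ∈ [π/2, 3π/2 − γ]`, if `θ₁ ∈ (0, π/2]` satisfies
`cot θ₁ = −cos(θ+γ)`, then `f(θ₁) ≥ f(θ)·(1 + cos²(θ+γ))/(2 + sin(θ+γ))`. -/
theorem f_comparison_parabola
    (β βcr cβ α : ℝ) (ψ ψ' : ℝ → ℝ)
    (hβ1 : Real.pi ≤ β) (hβ2 : β ≤ 2 * Real.pi)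
    (hβcr : isBetaCr βcr) (hcβ : isHardyConst βcr β cβ)
    (hα : α = (1 + Real.sqrt (1 - 4 * cβ)) / 2)
    (hpos : ∀ θ ∈ Set.Ioo 0 β, 0 < ψ θ)
    (hder : ∀ θ ∈ Set.Ioo 0 β, HasDerivAt ψ (ψ' θ) θ)
    (hode : ∀ θ ∈ Set.Ioo 0 β, HasDerivAt ψ' (-(cβ * Vpot β θ * ψ θ)) θ)
    (hbc : ψ' (β / 2) = 0)
    (hsym : ∀ θ, ψ (β - θ) = ψ θ)
    (hnorm : Filter.Tendsto (fun θ => ψ θ / θ ^ α) (nhdsWithin 0 (Set.Ioi 0)) (nhds 1))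
    (γ θ θ₁ : ℝ) (hγ1 : Real.pi / 2 ≤ γ) (hγ2 : γ ≤ Real.pi)
    (hθ : θ ∈ Set.Icc (Real.pi / 2) (3 * Real.pi / 2 - γ))
    (hθ₁ : θ₁ ∈ Set.Ioc 0 (Real.pi / 2))
    (hcot : Real.cot θ₁ = -Real.cos (θ + γ)) :
    ψ' θ / ψ θ * ((1 + Real.cos (θ + γ) ^ 2) / (2 + Real.sin (θ + γ))) ≤
      ψ' θ₁ / ψ θ₁ :=
  f_comparison_parabola_general β βcr cβ α ψ ψ' hβ1 hβ2 hβcr hcβ hα hpos hder hode hbc hnorm γ θ θ₁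
    hγ1 hθ hθ₁ hcot
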